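/- arXiv:1304.0180 — 6 statements merged into one kernel-verified Lean document; each statement's English description precedes it below -/
import Mathlib

section
/- Let P, Q ∈ 𝒢 be adjacent. Then there exists R ∈ 𝒢 with R ≠ P and R ≠ Q such that for every X ∈ 𝒢 that is complementary to R, X is complementary to P or X is complementary to Q. -/
open Submodule

/-- `X` belongs to the Grassmannian 𝒢: `X` is isomorphic (as a `K`-vector space)
to the quotient `V ⧸ X`, equivalently to one (hence every) complement of `X`. -/
def InG (K V : Type*) [DivisionRing K] [AddCommGroup V] [Module K V]
    (X : Submodule K V) : Prop :=
  Nonempty (X ≃ₗ[K] (V ⧸ X))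

/-- `quotRank K V A B` is the dimension of the quotient space `B / (A ∩ B)`,
where `A ∩ B` is viewed as a subspace of `B`.  For `A ≤ B` this is `dim (B/A)`. -/
noncomputable def quotRank (K V : Type*) [DivisionRing K] [AddCommGroup V] [Module K V]
    (A B : Submodule K V) : Cardinal :=
  Module.rank K (↥B ⧸ (A.comap B.subtype))

/-- `X` and `Y` are adjacent: `dim ((X+Y)/X) = dim ((X+Y)/Y) = 1`. -/
def Adjacent (K V : Type*) [DivisionRing K] [AddCommGroup V] [Module K V]
    (X Y : Submodule K V) : Prop :=
  quotRank K V X (X ⊔ Y) = 1 ∧ quotRank K V Y (X ⊔ Y) = 1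

section Aux
variable {K V : Type*} [DivisionRing K] [AddCommGroup V] [Module K V]

/-- If `a ∉ D`, then `D ⊔ span {a}` is isomorphic to `D × K`. -/
lemma auxEquiv (D : Submodule K V) (a : V) (ha : a ∉ D) :
    Nonempty ((↥(D ⊔ span K {a})) ≃ₗ[K] (↥D × K)) := by
  let f : (↥D × K) →ₗ[K] V := D.subtype.coprod (LinearMap.toSpanSingleton K V a)
  have hinj : Function.Injective f := by
    rw [← LinearMap.ker_eq_bot, eq_bot_iff]
    rintro ⟨d, c⟩ h
    have h' : (d : V) + c • a = 0 := h
    have hc : c = 0 := by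
      by_contra hc
      have hca : c • a = -(d : V) := by
        rw [add_comm] at h'; exact eq_neg_of_add_eq_zero_left h'
      exact ha (by
        rw [← inv_smul_smul₀ hc a, hca]; exact D.smul_mem _ (D.neg_mem d.2))
    subst hc
    simp only [zero_smul, add_zero] at h'
    have hd : d = 0 := Subtype.ext h'
    simp [hd, Prod.ext_iff]
  have hrange : LinearMap.range f = D ⊔ span K {a} := by
    rw [LinearMap.range_coprod, Submodule.range_subtype, ← LinearMap.span_singleton_eq_range]
  exact ⟨((LinearEquiv.ofInjective f hinj).trans (LinearEquiv.ofEq _ _ hrange)).symm⟩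

/-- If `dim (B/A) = 1` and `b ∈ B \ A`, then `B ≤ A ⊔ span {b}`. -/
lemma lemA {A B : Submodule K V} (h : quotRank K V A B = 1) {b : V} (hbB : b ∈ B)
    (hbA : b ∉ A) : B ≤ A ⊔ span K {b} := by
  set A' := A.comap B.subtype with hA'
  have hβ : (Submodule.Quotient.mk (⟨b, hbB⟩ : B) : ↥B ⧸ A') ≠ 0 := by
    rw [ne_eq, Submodule.Quotient.mk_eq_zero]; exact hbA
  obtain ⟨v₀, hv₀ne, hv₀⟩ := rank_eq_one_iff.mp h
  obtain ⟨r, hr⟩ := hv₀ (Submodule.Quotient.mk (⟨b, hbB⟩ : B))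
  have hrne : r ≠ 0 := by rintro rfl; rw [zero_smul] at hr; exact hβ hr.symm
  intro x hx
  obtain ⟨c, hc⟩ := hv₀ (Submodule.Quotient.mk (⟨x, hx⟩ : B))
  have key : Submodule.Quotient.mk ((⟨x, hx⟩ : B) - (c * r⁻¹) • (⟨b, hbB⟩ : B))
      = (0 : ↥B ⧸ A') := by
    rw [Submodule.Quotient.mk_sub, Submodule.Quotient.mk_smul, ← hr, ← hc,
      smul_smul, mul_assoc, inv_mul_cancel₀ hrne, mul_one, sub_self]
  rw [Submodule.Quotient.mk_eq_zero] at key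
  have key' : x - (c * r⁻¹) • b ∈ A := key
  have hx' : x = (x - (c * r⁻¹) • b) + (c * r⁻¹) • b := by abel
  rw [hx']
  exact add_mem_sup key' (smul_mem _ _ (mem_span_singleton_self b))

/-- If `b ∈ B \ A` and `B ≤ A ⊔ span {b}`, then `dim (B/A) = 1`. -/
lemma lemB {A B : Submodule K V} {b : V} (hbB : b ∈ B) (hbA : b ∉ A)
    (hle : B ≤ A ⊔ span K {b}) : quotRank K V A B = 1 := by
  rw [quotRank, rank_eq_one_iff]
  refine ⟨Submodule.Quotient.mk ⟨b, hbB⟩, ?_, ?_⟩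
  · rw [ne_eq, Submodule.Quotient.mk_eq_zero]; exact hbA
  · intro w
    obtain ⟨s, rfl⟩ := Submodule.Quotient.mk_surjective _ w
    obtain ⟨a, haA, z, hz, hsz⟩ := Submodule.mem_sup.mp (hle s.2)
    obtain ⟨c, rfl⟩ := Submodule.mem_span_singleton.mp hz
    refine ⟨c, ?_⟩
    rw [← Submodule.Quotient.mk_smul, Submodule.Quotient.eq]
    show (↑(c • (⟨b, hbB⟩ : B) - s) : V) ∈ A
    have hcoe : (↑(c • (⟨b, hbB⟩ : B) - s) : V) = c • b - ↑s := by simp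
    rw [hcoe, ← hsz]
    simp [A.neg_mem haA]

lemma lemNotLe {A B : Submodule K V} (h : quotRank K V A B = 1) : ¬ B ≤ A := by
  intro hle
  have htop : A.comap B.subtype = ⊤ := by
    rw [eq_top_iff]; intro x _; exact hle x.2
  haveI : Subsingleton (↥B ⧸ A.comap B.subtype) :=
    Submodule.Quotient.subsingleton_iff.mpr htop
  rw [quotRank, rank_subsingleton'] at h
  exact zero_ne_one h

/-- Moving a complement across a one-dimensional extension. -/
lemma lemC {S W A : Submodule K V} (hSW : IsCompl S W) {a : V} (ha : a ∉ A)
    (hAa : A ⊔ span K {a} = S) : IsCompl A (W ⊔ span K {a}) := by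
  have haS : a ∈ S := hAa ▸ mem_sup_right (mem_span_singleton_self a)
  have hAS : A ≤ S := hAa ▸ le_sup_left
  constructor
  · rw [disjoint_def]
    intro x hxA hx
    obtain ⟨w, hw, z, hz, rfl⟩ := Submodule.mem_sup.mp hx
    obtain ⟨c, rfl⟩ := Submodule.mem_span_singleton.mp hz
    have hwS : w ∈ S := by
      have hw' : w = (w + c • a) - c • a := by abel
      rw [hw']; exact sub_mem (hAS hxA) (S.smul_mem _ haS)
    have hw0 : w = 0 := disjoint_def.mp hSW.disjoint w hwS hw
    subst hw0
    rw [zero_add] at hxA ⊢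
    rcases eq_or_ne c 0 with rfl | hc
    · simp
    · exact absurd (by rw [← inv_smul_smul₀ hc a]; exact A.smul_mem _ hxA) ha
  · rw [codisjoint_iff]
    calc A ⊔ (W ⊔ span K {a}) = (A ⊔ span K {a}) ⊔ W := by
          rw [sup_comm W, ← sup_assoc]
      _ = ⊤ := by rw [hAa, codisjoint_iff.mp hSW.codisjoint]

/-- The key step: `X` is a complement of `A` provided `dim (S/A) = 1`, a suitable
vector `v ∈ (X ∩ S) \ A` exists, and `X ∩ S` consists of multiples of `v`. -/
lemma lemMain {A S X : Submodule K V} {v : V} (hq : quotRank K V A S = 1)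
    (hAS : A ≤ S) (hvS : v ∈ S) (hvA : v ∉ A) (hvX : v ∈ X)
    (htop : ⊤ ≤ X ⊔ S)
    (hmult : ∀ x ∈ X, x ∈ S → ∃ c : K, x = c • v) :
    IsCompl X A := by
  constructor
  · rw [disjoint_def]
    intro x hxX hxA
    obtain ⟨c, rfl⟩ := hmult x hxX (hAS hxA)
    rcases eq_or_ne c 0 with rfl | hc
    · simp
    · exact absurd (by rw [← inv_smul_smul₀ hc v]; exact A.smul_mem _ hxA) hvA
  · rw [codisjoint_iff, eq_top_iff]
    have h1 : S ≤ A ⊔ X :=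
      (lemA hq hvS hvA).trans (sup_le_sup_left (span_le.mpr (Set.singleton_subset_iff.mpr hvX)) A)
    calc ⊤ ≤ X ⊔ S := htop
      _ ≤ X ⊔ (A ⊔ X) := sup_le_sup_left h1 X
      _ = X ⊔ A := by rw [sup_comm A X, ← sup_assoc, sup_idem]

end Aux

/-- If `P, Q ∈ 𝒢` are adjacent, then there is `R ∈ 𝒢` with `R ≠ P`, `R ≠ Q` such that
every `X ∈ 𝒢` complementary to `R` is complementary to `P` or to `Q`. -/
theorem stmt_0 (K V : Type*) [DivisionRing K] [AddCommGroup V] [Module K V]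
    (P Q : Submodule K V) (hP : InG K V P) (hQ : InG K V Q)
    (hPQ : Adjacent K V P Q) :
    ∃ R : Submodule K V, InG K V R ∧ R ≠ P ∧ R ≠ Q ∧
      ∀ X : Submodule K V, InG K V X → IsCompl X R → (IsCompl X P ∨ IsCompl X Q) := by
  obtain ⟨h1, h2⟩ := hPQ
  set S := P ⊔ Q with hS
  set D := P ⊓ Q with hD
  -- pick q ∈ Q \ P
  obtain ⟨s, hsS, hsP⟩ := SetLike.not_le_iff_exists.mp (lemNotLe h1)
  obtain ⟨a, haP, q, hqQ, rfl⟩ := Submodule.mem_sup.mp hsS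
  have hqP : q ∉ P := fun h => hsP (add_mem haP h)
  -- pick p ∈ P \ Q
  obtain ⟨t, htS, htQ⟩ := SetLike.not_le_iff_exists.mp (lemNotLe h2)
  obtain ⟨p, hpP, b, hbQ, rfl⟩ := Submodule.mem_sup.mp htS
  have hpQ : p ∉ Q := fun h => htQ (add_mem h hbQ)
  clear hsS hsP htS htQ haP hbQ
  have hpS : p ∈ S := mem_sup_left hpP
  have hqS : q ∈ S := mem_sup_right hqQ
  have hpqS : p + q ∈ S := add_mem hpS hqS
  have hpqP : p + q ∉ P := fun h => hqP (by have := sub_mem h hpP; simpa using this)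
  have hpqQ : p + q ∉ Q := fun h => hpQ (by have := sub_mem h hqQ; simpa using this)
  have hpqD : p + q ∉ D := fun h => hpqP h.1
  set R := D ⊔ span K {p + q} with hR
  have hDR : D ≤ R := le_sup_left
  have hDP : D ≤ P := inf_le_left
  have hDQ : D ≤ Q := inf_le_right
  have hpqR : p + q ∈ R := mem_sup_right (mem_span_singleton_self _)
  have hRneP : R ≠ P := fun h => hpqP (h ▸ hpqR)
  have hRneQ : R ≠ Q := fun h => hpqQ (h ▸ hpqR)
  have hRS : R ≤ S :=
    sup_le (hDP.trans le_sup_left) (span_le.mpr (Set.singleton_subset_iff.mpr hpqS))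
  have hSle_Qp : S ≤ Q ⊔ span K {p} := lemA h2 hpS hpQ
  have hSle_Pq : S ≤ P ⊔ span K {q} := lemA h1 hqS hqP
  have hPle : P ≤ D ⊔ span K {p} := by
    intro x hx
    obtain ⟨y, hyQ, z, hz, rfl⟩ := Submodule.mem_sup.mp (hSle_Qp (mem_sup_left hx))
    have hzP : z ∈ P := by
      obtain ⟨c, rfl⟩ := mem_span_singleton.mp hz; exact P.smul_mem _ hpP
    have hyP : y ∈ P := by have := sub_mem hx hzP; simpa using this
    exact add_mem_sup (mem_inf.mpr ⟨hyP, hyQ⟩) hz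
  have hQle : Q ≤ D ⊔ span K {q} := by
    intro x hx
    obtain ⟨y, hyP, z, hz, rfl⟩ := Submodule.mem_sup.mp (hSle_Pq (mem_sup_right hx))
    have hzQ : z ∈ Q := by
      obtain ⟨c, rfl⟩ := mem_span_singleton.mp hz; exact Q.smul_mem _ hqQ
    have hyQ : y ∈ Q := by have := sub_mem hx hzQ; simpa using this
    exact add_mem_sup (mem_inf.mpr ⟨hyP, hyQ⟩) hz
  have hpR : p ∉ R := by
    intro h
    obtain ⟨d, hd, z, hz, hpd⟩ := Submodule.mem_sup.mp h
    obtain ⟨c, rfl⟩ := mem_span_singleton.mp hz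
    rw [smul_add] at hpd
    have hd' : d = p - (c • p + c • q) := eq_sub_of_add_eq hpd
    have key : (1 - c) • p - c • q = d := by
      rw [hd', sub_smul, one_smul]; abel
    have hdQ : d ∈ Q := hDQ hd
    rcases eq_or_ne (1 - c) 0 with h1c | h1c
    · have hc1 : c = 1 := by
        have := sub_eq_zero.mp h1c; exact this.symm
      have hdq : d = -q := by rw [← key, h1c, zero_smul, hc1, one_smul, zero_sub]
      exact hqP (hDP (by rw [← neg_neg q, ← hdq]; exact D.neg_mem hd))
    · have hmem : (1 - c) • p ∈ Q := by
        have he : (1 - c) • p = d + c • q := by rw [← key]; abel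
        rw [he]; exact add_mem hdQ (Q.smul_mem _ hqQ)
      exact hpQ (by rw [← inv_smul_smul₀ h1c p]; exact Q.smul_mem _ hmem)
  have hqRp : q ∈ R ⊔ span K {p} := by
    have hq' : q = (p + q) - p := by abel
    rw [hq']
    exact sub_mem (mem_sup_left hpqR) (mem_sup_right (mem_span_singleton_self p))
  have hRSsup : R ⊔ span K {p} = S := by
    apply le_antisymm
    · exact sup_le hRS (span_le.mpr (Set.singleton_subset_iff.mpr hpS))
    · rw [hS]
      apply sup_le
      · exact hPle.trans (sup_le_sup_right hDR _)
      · refine hQle.trans (sup_le (hDR.trans le_sup_left) ?_)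
        exact span_le.mpr (Set.singleton_subset_iff.mpr hqRp)
  have hquotRS : quotRank K V R S = 1 := lemB hpS hpR hRSsup.ge
  -- `R` belongs to the Grassmannian
  obtain ⟨W, hW⟩ := Submodule.exists_isCompl S
  have hpD : p ∉ D := fun h => hpQ h.2
  have hPeq : P = D ⊔ span K {p} :=
    le_antisymm hPle (sup_le hDP (span_le.mpr (Set.singleton_subset_iff.mpr hpP)))
  have hPsupq : P ⊔ span K {q} = S :=
    le_antisymm (sup_le le_sup_left (span_le.mpr (Set.singleton_subset_iff.mpr hqS))) hSle_Pq
  have hC1 : IsCompl P (W ⊔ span K {q}) := lemC hW hqP hPsupq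
  have hC2 : IsCompl R (W ⊔ span K {p}) := lemC hW hpR hRSsup
  have hp0 : p ≠ 0 := fun h => hpQ (h ▸ Q.zero_mem)
  have hq0 : q ≠ 0 := fun h => hqP (h ▸ P.zero_mem)
  have hpW : p ∉ W := fun h => hp0 (disjoint_def.mp hW.disjoint p hpS h)
  have hqW : q ∉ W := fun h => hq0 (disjoint_def.mp hW.disjoint q hqS h)
  have hInGR : InG K V R := by
    obtain ⟨e1⟩ := auxEquiv D (p + q) hpqD
    obtain ⟨e2⟩ := auxEquiv D p hpD
    obtain ⟨e5⟩ := auxEquiv W q hqW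
    obtain ⟨e6⟩ := auxEquiv W p hpW
    obtain ⟨eP⟩ := hP
    exact ⟨(((((((LinearEquiv.ofEq R _ hR).trans e1).trans e2.symm).trans
      (LinearEquiv.ofEq _ P hPeq.symm)).trans eP).trans
      (Submodule.quotientEquivOfIsCompl P _ hC1)).trans e5).trans
      (e6.symm.trans (Submodule.quotientEquivOfIsCompl R _ hC2).symm)⟩
  refine ⟨R, hInGR, hRneP, hRneQ, ?_⟩
  intro X _hX hXR
  have hcompl' : IsCompl (X.comap S.subtype) (R.comap S.subtype) := by
    constructor
    · rw [disjoint_def]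
      intro x hx1 hx2
      exact Subtype.ext (disjoint_def.mp hXR.disjoint x.1 hx1 hx2)
    · rw [codisjoint_iff, eq_top_iff]
      intro s _
      have hsX : (s : V) ∈ X ⊔ R := by
        rw [codisjoint_iff.mp hXR.codisjoint]; trivial
      obtain ⟨x, hx, r, hr, hsum⟩ := Submodule.mem_sup.mp hsX
      have hrS : r ∈ S := hRS hr
      have hxS : x ∈ S := by
        have hx' : x = (s : V) - r := by rw [← hsum]; abel
        rw [hx']; exact sub_mem s.2 hrS
      exact Submodule.mem_sup.mpr ⟨⟨x, hxS⟩, hx, ⟨r, hrS⟩, hr, Subtype.ext hsum⟩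
  have hrankX' : Module.rank K (X.comap S.subtype) = 1 := by
    have e := Submodule.quotientEquivOfIsCompl _ _ hcompl'.symm
    rw [← e.rank_eq]
    exact hquotRS
  obtain ⟨v₀, hv₀ne, hv₀⟩ := rank_eq_one_iff.mp hrankX'
  have hvX : ((v₀ : ↥S) : V) ∈ X := v₀.2
  have hvS : ((v₀ : ↥S) : V) ∈ S := (v₀ : ↥S).2
  have hvne : ((v₀ : ↥S) : V) ≠ 0 := by
    intro h
    apply hv₀ne
    apply Subtype.val_injective
    apply Subtype.val_injective
    simpa using h
  have hvR : ((v₀ : ↥S) : V) ∉ R :=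
    fun h => hvne (disjoint_def.mp hXR.disjoint _ hvX h)
  have hmult : ∀ x ∈ X, x ∈ S → ∃ c : K, x = c • ((v₀ : ↥S) : V) := by
    intro x hx hxS
    obtain ⟨r, hr⟩ := hv₀ ⟨⟨x, hxS⟩, hx⟩
    exact ⟨r, by simpa using congrArg (fun z : ↥(X.comap S.subtype) => ((z : ↥S) : V)) hr.symm⟩
  have htop : ⊤ ≤ X ⊔ S := by
    rw [← codisjoint_iff.mp hXR.codisjoint]
    exact sup_le_sup_left hRS X
  by_cases hvP : ((v₀ : ↥S) : V) ∈ P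
  · right
    have hvQ : ((v₀ : ↥S) : V) ∉ Q := fun h => hvR (hDR (mem_inf.mpr ⟨hvP, h⟩))
    exact lemMain h2 le_sup_right hvS hvQ hvX htop hmult
  · left
    exact lemMain h1 le_sup_left hvS hvP hvX htop hmult
end

section
/- Let P, Q ∈ 𝒢 and suppose there exists R ∈ 𝒢 with R ≠ P and R ≠ Q such that for every X ∈ 𝒢 that is complementary to R, X is complementary to P or X is complementary to Q. Then P and Q are adjacent. -/
open Submodule

/-!
Suppose `p ∈ P \ R` and `q ∈ Q`. If `q ∉ ⟨p⟩ + R`, then `⟨p, q⟩` is disjoint from `R` and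
extends to a complement of `R` that meets both `P` and `Q`; so `Q ≤ ⟨p⟩ + R`, and symmetrically,
whence `P + R = Q + R = ⟨p⟩ + R =: H` covers `R`. Since `R ≠ Q`, some complement of `R` is a
complement of `P` (otherwise every complement of `R` is one of `Q`, forcing `Q = R`), and a common
complement of `P` and `R` makes `H` cover `P` as well; likewise `H` covers `Q`. As `P ≠ Q`, this
gives `P + Q = H`, so `P + Q` covers both `P` and `Q`: these covering relations are adjacency.
-/

section ModularLattice

variable {α : Type*} [Lattice α] [BoundedOrder α] [IsModularLattice α] {a b x : α}

theorem eq_of_le_of_isCompl_of_isCompl (hab : a ≤ b) (ha : IsCompl a x) (hb : IsCompl b x) :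
    a = b :=
  eq_of_le_of_inf_le_of_sup_le hab (by rw [hb.inf_eq_bot]; exact bot_le)
    (by rw [hb.sup_eq_top, ha.sup_eq_top])

/-- With `y = x ⊓ (a ⊔ b)`, disjoint from both `a` and `b`, we have `a ⊔ b = a ⊔ y = b ⊔ y`,
so each of `a ⋖ a ⊔ b` and `b ⋖ a ⊔ b` says that `y` is an atom. -/
theorem covBy_sup_of_isCompl_of_isCompl (ha : IsCompl a x) (hb : IsCompl b x)
    (h : b ⋖ a ⊔ b) : a ⋖ a ⊔ b := by
  set y := x ⊓ (a ⊔ b)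
  have hay : a ⊔ y = a ⊔ b := by
    rw [← sup_inf_assoc_of_le x le_sup_left, ha.sup_eq_top, top_inf_eq]
  have hby : b ⊔ y = a ⊔ b := by
    rw [← sup_inf_assoc_of_le x le_sup_right, hb.sup_eq_top, top_inf_eq]
  have hy : ⊥ ⋖ y := by
    rw [← hby] at h
    have := inf_covBy_of_covBy_sup_left h
    rwa [(hb.disjoint.mono_right inf_le_left).eq_bot] at this
  rw [← hay]
  exact covBy_sup_of_inf_covBy_right (by rwa [(ha.disjoint.mono_right inf_le_left).eq_bot])

end ModularLattice

section Submodule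

variable {K V : Type*} [DivisionRing K] [AddCommGroup V] [Module K V] {P Q R : Submodule K V}

theorem inG_of_isCompl {X : Submodule K V} (hR : InG K V R) (h : IsCompl X R) :
    InG K V X := by
  obtain ⟨e⟩ := hR
  exact ⟨(quotientEquivOfIsCompl R X h.symm).symm ≪≫ₗ e.symm ≪≫ₗ
    (quotientEquivOfIsCompl X R h).symm⟩

theorem quotRank_eq_one_iff_covBy {A B : Submodule K V} (hAB : A ≤ B) :
    quotRank K V A B = 1 ↔ A ⋖ B := by
  rw [covBy_iff_quot_is_simple hAB, isSimpleModule_iff_finrank_eq_one, Module.finrank,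
    Cardinal.toNat_eq_one, quotRank]

theorem eq_of_forall_isCompl_imp_isCompl
    (h : ∀ X : Submodule K V, IsCompl X R → IsCompl X P) : P = R := by
  obtain ⟨X, hX⟩ := R.exists_isCompl
  refine eq_of_le_of_isCompl_of_isCompl (fun p hp => ?_) (h X hX.symm).symm hX
  by_contra hpR
  obtain ⟨Y, hpY, hY⟩ := (disjoint_span_singleton_of_notMem hpR).symm.exists_isCompl
  have hp0 : p = 0 := disjoint_def.1 (h Y hY).disjoint p (hpY (mem_span_singleton_self p)) hp
  exact hpR (hp0 ▸ R.zero_mem)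

theorem exists_isCompl_isCompl_of_ne
    (h : ∀ X : Submodule K V, IsCompl X R → IsCompl X P ∨ IsCompl X Q) (hRQ : R ≠ Q) :
    ∃ X : Submodule K V, IsCompl X R ∧ IsCompl X P := by
  by_contra! hno
  exact hRQ (eq_of_forall_isCompl_imp_isCompl fun X hX => (h X hX).resolve_left (hno X hX)).symm

theorem le_span_singleton_sup
    (h : ∀ X : Submodule K V, IsCompl X R → IsCompl X P ∨ IsCompl X Q) {p : V} (hp : p ∈ P)
    (hpR : p ∉ R) : Q ≤ K ∙ p ⊔ R := by
  intro q hq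
  by_contra hqpR
  have hpq : Disjoint (K ∙ q ⊔ K ∙ p) R :=
    (disjoint_span_singleton_of_notMem hpR).symm.disjoint_sup_left_of_disjoint_sup_right
      (disjoint_span_singleton_of_notMem hqpR).symm
  obtain ⟨X, hpqX, hX⟩ := hpq.exists_isCompl
  rcases h X hX with hXP | hXQ
  · have hp0 : p = 0 :=
      disjoint_def.1 hXP.disjoint p (hpqX (mem_sup_right (mem_span_singleton_self p))) hp
    exact hpR (hp0 ▸ R.zero_mem)
  · have hq0 : q = 0 :=
      disjoint_def.1 hXQ.disjoint q (hpqX (mem_sup_left (mem_span_singleton_self q))) hq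
    exact hqpR (hq0 ▸ zero_mem _)

end Submodule

theorem stmt_1_general (K V : Type*) [DivisionRing K] [AddCommGroup V] [Module K V]
    (P Q : Submodule K V)
    (R : Submodule K V) (hR : InG K V R) (hRP : R ≠ P) (hRQ : R ≠ Q)
    (hmain : ∀ X : Submodule K V, InG K V X → IsCompl X R → (IsCompl X P ∨ IsCompl X Q)) :
    Adjacent K V P Q := by
  have h : ∀ X, IsCompl X R → IsCompl X P ∨ IsCompl X Q :=
    fun X hX => hmain X (inG_of_isCompl hR hX) hX
  have h' : ∀ X, IsCompl X R → IsCompl X Q ∨ IsCompl X P := fun X hX => (h X hX).symm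
  obtain ⟨X, hXR, hXP⟩ := exists_isCompl_isCompl_of_ne h hRQ
  obtain ⟨Y, hYR, hYQ⟩ := exists_isCompl_isCompl_of_ne h' hRP
  obtain ⟨p, hp, hpR⟩ := SetLike.not_le_iff_exists.1 fun hPR =>
    hRP (eq_of_le_of_isCompl_of_isCompl hPR hXP.symm hXR.symm).symm
  obtain ⟨q, hq, hqR⟩ := SetLike.not_le_iff_exists.1 fun hQR =>
    hRQ (eq_of_le_of_isCompl_of_isCompl hQR hYQ.symm hYR.symm).symm
  set H := K ∙ p ⊔ R
  have hRH : R ⋖ H := covBy_span_singleton_sup hpR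
  have hQH : Q ≤ H := le_span_singleton_sup h hp hpR
  have hPH : P ≤ H := (le_span_singleton_sup h' hq hqR).trans
    (sup_le ((span_singleton_le_iff_mem q H).2 (hQH hq)) le_sup_right)
  have hPR : P ⊔ R = H := ((hRH.eq_or_eq le_sup_right (sup_le hPH hRH.le)).resolve_left
    fun hPR => hpR (hPR ▸ mem_sup_left hp))
  have hQR : Q ⊔ R = H := ((hRH.eq_or_eq le_sup_right (sup_le hQH hRH.le)).resolve_left
    fun hQR => hqR (hQR ▸ mem_sup_left hq))
  have hPcov : P ⋖ H := hPR ▸ covBy_sup_of_isCompl_of_isCompl hXP.symm hXR.symm (hPR ▸ hRH)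
  have hQcov : Q ⋖ H := hQR ▸ covBy_sup_of_isCompl_of_isCompl hYQ.symm hYR.symm (hQR ▸ hRH)
  have hPQ : P ≠ Q := fun hPQ =>
    hRP (eq_of_forall_isCompl_imp_isCompl fun X hX => (h X hX).elim id (hPQ ▸ ·)).symm
  have hsup : P ⊔ Q = H := hPcov.wcovBy.sup_eq hQcov.wcovBy hPQ
  exact ⟨(quotRank_eq_one_iff_covBy le_sup_left).2 (hsup ▸ hPcov),
    (quotRank_eq_one_iff_covBy le_sup_right).2 (hsup ▸ hQcov)⟩

/-- If for `P, Q ∈ 𝒢` there is `R ∈ 𝒢` with `R ≠ P`, `R ≠ Q` such that every `X ∈ 𝒢`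
complementary to `R` is complementary to `P` or to `Q`, then `P` and `Q` are adjacent. -/
theorem stmt_1 (K V : Type*) [DivisionRing K] [AddCommGroup V] [Module K V]
    (P Q : Submodule K V) (hP : InG K V P) (hQ : InG K V Q)
    (R : Submodule K V) (hR : InG K V R) (hRP : R ≠ P) (hRQ : R ≠ Q)
    (hmain : ∀ X : Submodule K V, InG K V X → IsCompl X R → (IsCompl X P ∨ IsCompl X Q)) :
    Adjacent K V P Q :=
  stmt_1_general K V P Q R hR hRP hRQ hmain
end

section
/- Let P, Q ∈ 𝒢 be adjacent and let R ∈ 𝒢 satisfy P ∩ Q < R < P + Q (strict inclusions). Then for every X ∈ 𝒢 that is complementary to R, X is complementary to P or X is complementary to Q. -/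
/-!
Everything happens in the modular lattice of subspaces. Adjacency says that `P` and `Q` are both
hyperplanes of `S = P + Q` (`P ⋖ S`, `Q ⋖ S`), hence `P ∩ Q ⋖ P` and `P ∩ Q ⋖ Q`. If `R` lies in
`P` or `Q` it equals it; otherwise `R ⋖ S` too. Then, by modularity, `X ∩ S` is a complement of `R`
in `S`, hence an atom (a line). That line is not inside `P ∩ Q ≤ R`, so it avoids one of the
hyperplanes `P`, `Q` of `S`, and a line of `S` outside a hyperplane `A` of `S` makes `X` a
complement of `A`.
-/

open Submodule

section UpperModular

variable {α : Type*} [Lattice α] [IsUpperModularLattice α] {M P R S : α}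

theorem CovBy.covBy_of_not_le (hPS : P ⋖ S) (hMP : M ⋖ P) (hMR : M ≤ R) (hRS : R < S)
    (hRP : ¬R ≤ P) : R ⋖ S := by
  have hsup : P ⊔ R = S :=
    (hPS.eq_or_eq le_sup_left (sup_le hPS.le hRS.le)).resolve_left fun h ↦
      hRP (h ▸ le_sup_right)
  have hinf : P ⊓ R = M := by
    refine ((hMP.eq_or_eq (le_inf hMP.le hMR) inf_le_left).resolve_right fun h ↦ ?_)
    exact hRS.ne (by rw [← hsup, sup_eq_right.2 (inf_eq_left.1 h)])
  exact hsup ▸ covBy_sup_of_inf_covBy_left (hinf ▸ hMP)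

end UpperModular

section Modular

variable {α : Type*} [Lattice α] [BoundedOrder α] [IsModularLattice α] {A R S X : α}

theorem IsCompl.isAtom_inf_of_covBy (h : IsCompl X R) (hRS : R ⋖ S) : IsAtom (X ⊓ S) := by
  have hsup : R ⊔ X ⊓ S = S := by
    rw [← sup_inf_assoc_of_le X hRS.le, h.symm.sup_eq_top, top_inf_eq]
  have hinf : R ⊓ (X ⊓ S) = ⊥ :=
    le_bot_iff.1 <| h.symm.inf_eq_bot ▸ inf_le_inf_left R inf_le_left
  rw [← bot_covBy_iff, ← hinf]
  exact inf_covBy_of_covBy_sup_left (hsup.symm ▸ hRS)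

theorem IsCompl.isCompl_of_covBy (h : IsCompl X R) (hRS : R ⋖ S) (hAS : A ⋖ S)
    (hXA : ¬X ⊓ S ≤ A) : IsCompl X A := by
  have hU := h.isAtom_inf_of_covBy hRS
  have hsup : A ⊔ X ⊓ S = S :=
    (hAS.eq_or_eq le_sup_left (sup_le hAS.le inf_le_right)).resolve_left fun h ↦
      hXA (h ▸ le_sup_right)
  constructor
  · rw [disjoint_iff, ← inf_eq_right.2 hAS.le, ← inf_assoc]
    exact (hU.not_le_iff_disjoint.1 hXA).eq_bot
  · rw [codisjoint_iff, eq_top_iff, ← h.sup_eq_top]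
    refine sup_le le_sup_left (hRS.le.trans ?_)
    rw [← hsup, sup_comm]
    exact sup_le_sup_right inf_le_left A

theorem IsCompl.isCompl_or_isCompl_of_lt_of_lt {P Q : α} (hP : P ⋖ P ⊔ Q) (hQ : Q ⋖ P ⊔ Q)
    (h : IsCompl X R) (hR₁ : P ⊓ Q < R) (hR₂ : R < P ⊔ Q) : IsCompl X P ∨ IsCompl X Q := by
  have hMP : P ⊓ Q ⋖ P := by
    rw [inf_comm]
    exact inf_covBy_of_covBy_sup_left (sup_comm P Q ▸ hQ)
  have hMQ : P ⊓ Q ⋖ Q := inf_covBy_of_covBy_sup_left hP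
  by_cases hRP : R ≤ P
  · exact .inl <| (hMP.eq_or_eq hR₁.le hRP).resolve_left hR₁.ne' ▸ h
  by_cases hRQ : R ≤ Q
  · exact .inr <| (hMQ.eq_or_eq hR₁.le hRQ).resolve_left hR₁.ne' ▸ h
  have hRS : R ⋖ P ⊔ Q := hP.covBy_of_not_le hMP hR₁.le hR₂ hRP
  by_cases hXP : X ⊓ (P ⊔ Q) ≤ P
  · refine .inr <| h.isCompl_of_covBy hRS hQ fun hXQ ↦ ?_
    -- `X ⊓ (P ⊔ Q) ≤ P ⊓ Q ≤ R` would make the atom `X ⊓ (P ⊔ Q)` vanish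
    refine (h.isAtom_inf_of_covBy hRS).1 (le_bot_iff.1 ?_)
    exact h.inf_eq_bot ▸ le_inf inf_le_left ((le_inf hXP hXQ).trans hR₁.le)
  · exact .inl <| h.isCompl_of_covBy hRS hP hXP

end Modular

theorem Submodule.covBy_of_quotRank_eq_one {K V : Type*} [DivisionRing K] [AddCommGroup V]
    [Module K V] {A B : Submodule K V} (hAB : A ≤ B) (h : quotRank K V A B = 1) : A ⋖ B :=
  (covBy_iff_quot_is_simple hAB).2 <|
    isSimpleModule_iff_finrank_eq_one.2 <| Module.finrank_eq_of_rank_eq (by exact_mod_cast h)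

theorem Adjacent.covBy_sup {K V : Type*} [DivisionRing K] [AddCommGroup V] [Module K V]
    {P Q : Submodule K V} (h : Adjacent K V P Q) : P ⋖ P ⊔ Q ∧ Q ⋖ P ⊔ Q :=
  ⟨covBy_of_quotRank_eq_one le_sup_left h.1, covBy_of_quotRank_eq_one le_sup_right h.2⟩

theorem stmt_2_general (K V : Type*) [DivisionRing K] [AddCommGroup V] [Module K V]
    (P Q : Submodule K V)
    (hPQ : Adjacent K V P Q)
    (R : Submodule K V) (hR1 : P ⊓ Q < R) (hR2 : R < P ⊔ Q) :
    ∀ X : Submodule K V, InG K V X → IsCompl X R → (IsCompl X P ∨ IsCompl X Q) := by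
  intro X _ hXR
  obtain ⟨hP, hQ⟩ := hPQ.covBy_sup
  exact hXR.isCompl_or_isCompl_of_lt_of_lt hP hQ hR1 hR2

/-- If `P, Q ∈ 𝒢` are adjacent and `R ∈ 𝒢` satisfies `P ∩ Q < R < P + Q`, then
every `X ∈ 𝒢` complementary to `R` is complementary to `P` or to `Q`. -/
theorem stmt_2 (K V : Type*) [DivisionRing K] [AddCommGroup V] [Module K V]
    (P Q : Submodule K V) (hP : InG K V P) (hQ : InG K V Q)
    (hPQ : Adjacent K V P Q)
    (R : Submodule K V) (hR : InG K V R) (hR1 : P ⊓ Q < R) (hR2 : R < P ⊔ Q) :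
    ∀ X : Submodule K V, InG K V X → IsCompl X R → (IsCompl X P ∨ IsCompl X Q) :=
  stmt_2_general K V P Q hPQ R hR1 hR2
end

section
/- For all subspaces A, B of V: if 0 ≠ A ≤ P and 0 ≠ B ≤ Q then (A + B) ∩ R ≠ 0; and if P ≤ A ≠ V and Q ≤ B ≠ V then (A ∩ B) + R ≠ V. -/
/-
Only the lattice of subspaces matters. If `(A ⊔ B) ⊓ R = ⊥`, enlarge `A ⊔ B` to a complement `X`
of `R`; then `X ∈ 𝒢`, so `X` is complementary to `P` or to `Q`, which forces `A ≤ X ⊓ P = ⊥` or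
`B ≤ X ⊓ Q = ⊥`. Dually, if `(A ⊓ B) ⊔ R = ⊤`, shrink `A ⊓ B` to a complement `X` of `R`, and
then `A ≥ X ⊔ P = ⊤` or `B ≥ X ⊔ Q = ⊤`.
-/

open Submodule

section Lattice

variable {α : Type*} [Lattice α] [BoundedOrder α] [IsModularLattice α] [ComplementedLattice α]
  {p q r : α}

theorem sup_inf_ne_bot_of_forall_isCompl
    (h : ∀ x, IsCompl x r → IsCompl x p ∨ IsCompl x q) {a b : α}
    (ha : a ≠ ⊥) (hap : a ≤ p) (hb : b ≠ ⊥) (hbq : b ≤ q) : (a ⊔ b) ⊓ r ≠ ⊥ := by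
  intro hab
  obtain ⟨x, habx, hx⟩ := (disjoint_iff.mpr hab).exists_isCompl
  rcases h x hx with hxp | hxq
  · exact ha (le_bot_iff.mp (hxp.inf_eq_bot ▸ le_inf (le_sup_left.trans habx) hap))
  · exact hb (le_bot_iff.mp (hxq.inf_eq_bot ▸ le_inf (le_sup_right.trans habx) hbq))

theorem inf_sup_ne_top_of_forall_isCompl
    (h : ∀ x, IsCompl x r → IsCompl x p ∨ IsCompl x q) {a b : α}
    (hpa : p ≤ a) (ha : a ≠ ⊤) (hqb : q ≤ b) (hb : b ≠ ⊤) : (a ⊓ b) ⊔ r ≠ ⊤ := by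
  intro hab
  obtain ⟨x, hxab, hx⟩ := (codisjoint_iff.mpr hab).exists_isCompl
  rcases h x hx with hxp | hxq
  · exact ha (top_le_iff.mp (hxp.sup_eq_top ▸ sup_le (hxab.trans inf_le_left) hpa))
  · exact hb (top_le_iff.mp (hxq.sup_eq_top ▸ sup_le (hxab.trans inf_le_right) hqb))

end Lattice

theorem InG.of_isCompl {K V : Type*} [DivisionRing K] [AddCommGroup V] [Module K V]
    {R X : Submodule K V} (hR : InG K V R) (h : IsCompl X R) : InG K V X :=
  ⟨(quotientEquivOfIsCompl R X h.symm).symm ≪≫ₗ hR.some.symm ≪≫ₗ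
    (quotientEquivOfIsCompl X R h).symm⟩

theorem stmt_3_general (K V : Type*) [DivisionRing K] [AddCommGroup V] [Module K V]
    (P Q R : Submodule K V) (hR : InG K V R)
    (hmain : ∀ X : Submodule K V, InG K V X → IsCompl X R → (IsCompl X P ∨ IsCompl X Q)) :
    ∀ A B : Submodule K V,
      ((A ≠ ⊥ → A ≤ P → B ≠ ⊥ → B ≤ Q → (A ⊔ B) ⊓ R ≠ ⊥) ∧
       (P ≤ A → A ≠ ⊤ → Q ≤ B → B ≠ ⊤ → (A ⊓ B) ⊔ R ≠ ⊤)) := by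
  have hcompl : ∀ X, IsCompl X R → IsCompl X P ∨ IsCompl X Q :=
    fun X hX => hmain X (hR.of_isCompl hX) hX
  exact fun A B =>
    ⟨sup_inf_ne_bot_of_forall_isCompl hcompl, inf_sup_ne_top_of_forall_isCompl hcompl⟩

/-- For all subspaces `A, B` of `V`: if `0 ≠ A ≤ P` and `0 ≠ B ≤ Q` then
`(A + B) ∩ R ≠ 0`; and if `P ≤ A ≠ V` and `Q ≤ B ≠ V` then `(A ∩ B) + R ≠ V`. -/
theorem stmt_3 (K V : Type*) [DivisionRing K] [AddCommGroup V] [Module K V]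
    (P Q R : Submodule K V) (hP : InG K V P) (hQ : InG K V Q) (hR : InG K V R)
    (hRP : R ≠ P) (hRQ : R ≠ Q)
    (hmain : ∀ X : Submodule K V, InG K V X → IsCompl X R → (IsCompl X P ∨ IsCompl X Q)) :
    ∀ A B : Submodule K V,
      ((A ≠ ⊥ → A ≤ P → B ≠ ⊥ → B ≤ Q → (A ⊔ B) ⊓ R ≠ ⊥) ∧
       (P ≤ A → A ≠ ⊤ → Q ≤ B → B ≠ ⊤ → (A ⊓ B) ⊔ R ≠ ⊤)) :=
  stmt_3_general K V P Q R hR hmain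
end

section
/- None of the following inclusions holds: P ≤ Q, Q ≤ P, P ≤ R, Q ≤ R. -/
/-!
Every vector outside `R` lies in some complement of `R`, and complements of `R ∈ 𝒢` are in 𝒢.
So a vector of `P ⊓ Q` outside `R` would give a complement of `R` meeting both `P` and `Q`;
hence `P ⊓ Q ≤ R`. If `P ≤ R`, a complement of `R` that misses being a complement of `Q`
must complement `P`, and by modularity two comparable subspaces with a common complement
are equal, so `P = R`.
-/

open Submodule

lemma IsCompl.eq_of_le_of_isCompl {α : Type*} [Lattice α] [BoundedOrder α] [IsModularLattice α]
    {x a b : α} (ha : IsCompl x a) (hb : IsCompl x b) (hab : a ≤ b) : a = b :=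
  eq_of_le_of_inf_le_of_sup_le (z := x) hab (by rw [inf_comm, hb.inf_eq_bot]; exact bot_le)
    (by rw [sup_comm a, ha.sup_eq_top]; exact le_top)

namespace InG

variable {K V : Type*} [DivisionRing K] [AddCommGroup V] [Module K V]

lemma of_isCompl_s5 {X R : Submodule K V} (hR : InG K V R) (h : IsCompl X R) : InG K V X := by
  obtain ⟨e⟩ := hR
  exact ⟨(quotientEquivOfIsCompl R X h.symm).symm ≪≫ₗ e.symm ≪≫ₗ
    (quotientEquivOfIsCompl X R h).symm⟩

end InG

section Complements

variable {K V : Type*} [DivisionRing K] [AddCommGroup V] [Module K V]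

lemma exists_mem_isCompl_of_notMem {R : Submodule K V} {q : V} (hq : q ∉ R) :
    ∃ X : Submodule K V, q ∈ X ∧ IsCompl X R := by
  have hdisj : Disjoint (span K {q}) R :=
    ((disjoint_span_singleton' (ne_of_mem_of_not_mem R.zero_mem hq).symm).mpr hq).symm
  obtain ⟨X, hqX, hXR⟩ := hdisj.exists_isCompl
  exact ⟨X, hqX (mem_span_singleton_self q), hXR⟩

lemma not_isCompl_of_mem_of_mem {X A : Submodule K V} {q : V} (hq : q ≠ 0) (hqX : q ∈ X)
    (hqA : q ∈ A) : ¬ IsCompl X A :=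
  fun h => hq ((disjoint_def.mp h.disjoint) q hqX hqA)

lemma exists_isCompl_not_isCompl {Q R : Submodule K V} (hQR : Q ≠ R) :
    ∃ X : Submodule K V, IsCompl X R ∧ ¬ IsCompl X Q := by
  by_cases hle : Q ≤ R
  · obtain ⟨X, hXR⟩ := Submodule.exists_isCompl R
    exact ⟨X, hXR.symm, fun hXQ => hQR (hXQ.eq_of_le_of_isCompl hXR.symm hle)⟩
  · obtain ⟨q, hqQ, hqR⟩ := SetLike.not_le_iff_exists.mp hle
    obtain ⟨X, hqX, hXR⟩ := exists_mem_isCompl_of_notMem hqR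
    exact ⟨X, hXR, not_isCompl_of_mem_of_mem (ne_of_mem_of_not_mem R.zero_mem hqR).symm hqX hqQ⟩

end Complements

section CoveringComplements

variable {K V : Type*} [DivisionRing K] [AddCommGroup V] [Module K V] {P Q R : Submodule K V}

def ComplementsCovered (P Q R : Submodule K V) : Prop :=
  ∀ X : Submodule K V, InG K V X → IsCompl X R → IsCompl X P ∨ IsCompl X Q

lemma ComplementsCovered.symm (h : ComplementsCovered P Q R) : ComplementsCovered Q P R :=
  fun X hX hXR => (h X hX hXR).symm

lemma ComplementsCovered.not_le (h : ComplementsCovered P Q R) (hR : InG K V R) (hRP : R ≠ P)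
    (hRQ : R ≠ Q) : ¬ P ≤ R := by
  intro hPR
  obtain ⟨X, hXR, hXQ⟩ := exists_isCompl_not_isCompl hRQ.symm
  have hXP : IsCompl X P := (h X (hR.of_isCompl_s5 hXR) hXR).resolve_right hXQ
  exact hRP (hXP.eq_of_le_of_isCompl hXR hPR).symm

lemma ComplementsCovered.inf_le (h : ComplementsCovered P Q R) (hR : InG K V R) :
    P ⊓ Q ≤ R := by
  intro q ⟨hqP, hqQ⟩
  by_contra hqR
  have hq : q ≠ 0 := (ne_of_mem_of_not_mem R.zero_mem hqR).symm
  obtain ⟨X, hqX, hXR⟩ := exists_mem_isCompl_of_notMem hqR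
  rcases h X (hR.of_isCompl_s5 hXR) hXR with hXP | hXQ
  · exact not_isCompl_of_mem_of_mem hq hqX hqP hXP
  · exact not_isCompl_of_mem_of_mem hq hqX hqQ hXQ

end CoveringComplements

theorem stmt_5_general (K V : Type*) [DivisionRing K] [AddCommGroup V] [Module K V]
    (P Q R : Submodule K V) (hR : InG K V R)
    (hRP : R ≠ P) (hRQ : R ≠ Q)
    (hmain : ∀ X : Submodule K V, InG K V X → IsCompl X R → (IsCompl X P ∨ IsCompl X Q)) :
    ¬ P ≤ Q ∧ ¬ Q ≤ P ∧ ¬ P ≤ R ∧ ¬ Q ≤ R := by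
  have hcov : ComplementsCovered P Q R := hmain
  have hPR : ¬ P ≤ R := hcov.not_le hR hRP hRQ
  have hQR : ¬ Q ≤ R := hcov.symm.not_le hR hRQ hRP
  have hinf : P ⊓ Q ≤ R := hcov.inf_le hR
  exact ⟨fun hPQ => hPR (inf_eq_left.mpr hPQ ▸ hinf),
    fun hQP => hQR (inf_eq_right.mpr hQP ▸ hinf), hPR, hQR⟩

/-- None of the inclusions `P ≤ Q`, `Q ≤ P`, `P ≤ R`, `Q ≤ R` holds. -/
theorem stmt_5 (K V : Type*) [DivisionRing K] [AddCommGroup V] [Module K V]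
    (P Q R : Submodule K V) (hP : InG K V P) (hQ : InG K V Q) (hR : InG K V R)
    (hRP : R ≠ P) (hRQ : R ≠ Q)
    (hmain : ∀ X : Submodule K V, InG K V X → IsCompl X R → (IsCompl X P ∨ IsCompl X Q)) :
    ¬ P ≤ Q ∧ ¬ Q ≤ P ∧ ¬ P ≤ R ∧ ¬ Q ≤ R :=
  stmt_5_general K V P Q R hR hRP hRQ hmain
end

section
/- Suppose dim V = 2m is finite. If φ : 𝒢 → 𝒢' is a bijection such that for all X, Y ∈ 𝒢, X and Y are adjacent if and only if φ(X) and φ(Y) are adjacent (i.e., φ is an isomorphism of the Grassmann graphs), then dim V' = 2m, and for all X, Y ∈ 𝒢, X and Y are complementary if and only if φ(X) and φ(Y) are complementary (i.e., φ is an isomorphism of the distant graphs). -/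
open Submodule

/-!
In the Grassmann graph on `𝒢` the distance from `X` to `Y` is `dim ((X + Y) / X)`. Along an
adjacency step this quantity changes by at most one (a tower inequality for quotient ranks, valid
in any dimension), and when `dim V = 2m` it can always be lowered by one by exchanging a hyperplane
of `X` through `X ∩ Y` for a vector of `Y \ X`. So the diameter is `m` and the pairs at distance `m`
are exactly the complementary ones. A graph isomorphism preserves distances and the diameter; the
diameter bound makes `V'` finite-dimensional, hence `dim V' = 2m`, and then complementarity,
being distance `m`, is preserved.
-/

namespace SimpleGraph
variable {α β : Type*} {G : SimpleGraph α} {G' : SimpleGraph β}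

lemma edist_map_le (f : G →g G') (u v : α) : G'.edist (f u) (f v) ≤ G.edist u v := by
  by_cases h : G.Reachable u v
  · obtain ⟨p, hp⟩ := h.exists_walk_length_eq_edist
    rw [← hp, ← p.length_map f]
    exact edist_le _
  · rw [edist_eq_top_of_not_reachable h]
    exact le_top

lemma Iso.edist_eq (e : G ≃g G') (u v : α) : G'.edist (e u) (e v) = G.edist u v :=
  le_antisymm (edist_map_le e.toHom u v) <| by
    simpa using edist_map_le e.symm.toHom (e u) (e v)

lemma Iso.ediam_eq (e : G ≃g G') : G'.ediam = G.ediam := by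
  simp only [ediam_eq_iSup_iSup_edist, ← e.edist_eq]
  rw [← e.toEquiv.iSup_comp]
  exact iSup_congr fun u => e.toEquiv.iSup_comp.symm

end SimpleGraph

section RankMapMkQ
variable {K V : Type*} [DivisionRing K] [AddCommGroup V] [Module K V]

lemma rank_comap_subtype_le (p q : Submodule K V) :
    Module.rank K (q.comap p.subtype) ≤ Module.rank K q := by
  rw [← rank_map_eq p.injective_subtype, map_comap_subtype]
  exact Submodule.rank_mono inf_le_right

lemma map_mkQ_sup_left (X Y : Submodule K V) : (X ⊔ Y).map X.mkQ = Y.map X.mkQ := by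
  rw [Submodule.map_sup, mkQ_map_self, bot_sup_eq]

lemma quotRank_sup_eq_rank_map_mkQ (X Y : Submodule K V) :
    quotRank K V X (X ⊔ Y) = Module.rank K (Y.map X.mkQ) := by
  have hker : LinearMap.ker (X.mkQ.domRestrict (X ⊔ Y)) = X.comap (X ⊔ Y).subtype := by
    rw [LinearMap.ker_domRestrict, ker_mkQ]
  have hrange : LinearMap.range (X.mkQ.domRestrict (X ⊔ Y)) = Y.map X.mkQ := by
    rw [LinearMap.range_domRestrict, map_mkQ_sup_left]
  rw [quotRank, ← hker, ← hrange]
  exact (X.mkQ.domRestrict (X ⊔ Y)).quotKerEquivRange.rank_eq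

lemma rank_map_mkQ_add_rank (X Y : Submodule K V) :
    Module.rank K (Y.map X.mkQ) + Module.rank K X = Module.rank K ↥(X ⊔ Y) := by
  have hker : LinearMap.ker (X.mkQ.domRestrict (X ⊔ Y)) = X.comap (X ⊔ Y).subtype := by
    rw [LinearMap.ker_domRestrict, ker_mkQ]
  rw [← map_mkQ_sup_left, ← LinearMap.range_domRestrict,
    ← (comapSubtypeEquivOfLe (le_sup_left : X ≤ X ⊔ Y)).rank_eq, ← hker]
  exact LinearMap.rank_range_add_rank_ker _

lemma rank_map_mkQ_le_add {A A' : Submodule K V} (h : A ≤ A') (B : Submodule K V) :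
    Module.rank K (B.map A.mkQ) ≤ Module.rank K (A'.map A.mkQ) + Module.rank K (B.map A'.mkQ) := by
  set g := (factor h).domRestrict (B.map A.mkQ)
  have hrange : LinearMap.range g = B.map A'.mkQ := by
    rw [LinearMap.range_domRestrict, ← Submodule.map_comp, factor_comp_mk]
  have hker : LinearMap.ker g = (A'.map A.mkQ).comap (B.map A.mkQ).subtype := by
    rw [LinearMap.ker_domRestrict, ker_mapQ, comap_id]
  calc Module.rank K (B.map A.mkQ)
      = Module.rank K (LinearMap.range g) + Module.rank K (LinearMap.ker g) :=
        (LinearMap.rank_range_add_rank_ker g).symm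
    _ ≤ Module.rank K (B.map A'.mkQ) + Module.rank K (A'.map A.mkQ) := by
        rw [hrange, hker]
        gcongr
        exact rank_comap_subtype_le _ _
    _ = _ := add_comm _ _

lemma rank_map_mkQ_le_of_le {A A' : Submodule K V} (h : A ≤ A') (B : Submodule K V) :
    Module.rank K (B.map A'.mkQ) ≤ Module.rank K (B.map A.mkQ) := by
  rw [← factor_comp_mk h, Submodule.map_comp]
  exact rank_map_le _ _

lemma rank_map_mkQ_triangle (X Y Z : Submodule K V) :
    Module.rank K (Y.map X.mkQ) ≤ Module.rank K (Z.map X.mkQ) + Module.rank K (Y.map Z.mkQ) :=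
  calc Module.rank K (Y.map X.mkQ)
      ≤ Module.rank K ((X ⊔ Z).map X.mkQ) + Module.rank K (Y.map (X ⊔ Z).mkQ) :=
        rank_map_mkQ_le_add le_sup_left Y
    _ ≤ Module.rank K (Z.map X.mkQ) + Module.rank K (Y.map Z.mkQ) := by
        rw [map_mkQ_sup_left]
        gcongr
        exact rank_map_mkQ_le_of_le le_sup_right Y

lemma adjacent_iff_rank_map_mkQ {X Y : Submodule K V} :
    Adjacent K V X Y ↔ Module.rank K (Y.map X.mkQ) = 1 ∧ Module.rank K (X.map Y.mkQ) = 1 := by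
  rw [Adjacent, sup_comm X Y, quotRank_sup_eq_rank_map_mkQ, sup_comm Y X,
    quotRank_sup_eq_rank_map_mkQ]

end RankMapMkQ

section GrassmannGraph
variable {K V : Type*} [DivisionRing K] [AddCommGroup V] [Module K V]

lemma Adjacent.symm {X Y : Submodule K V} (h : Adjacent K V X Y) : Adjacent K V Y X := by
  rw [Adjacent, sup_comm]
  exact And.symm h

lemma not_adjacent_self (X : Submodule K V) : ¬ Adjacent K V X X := by
  rw [adjacent_iff_rank_map_mkQ, mkQ_map_self, rank_bot]
  simp

lemma InG.of_isCompl_s10 {X C : Submodule K V} (hX : InG K V X) (h : IsCompl X C) : InG K V C := by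
  obtain ⟨e⟩ := hX
  exact ⟨(quotientEquivOfIsCompl X C h).symm ≪≫ₗ e.symm ≪≫ₗ
    (quotientEquivOfIsCompl C X h.symm).symm⟩

variable (K V) in
def grassmannGraph : SimpleGraph {X : Submodule K V // InG K V X} where
  Adj X Y := Adjacent K V X.1 Y.1
  symm := ⟨fun _ _ => Adjacent.symm⟩
  loopless := ⟨fun X => not_adjacent_self X.1⟩

lemma rank_map_mkQ_le_length {X Y : {X : Submodule K V // InG K V X}}
    (p : (grassmannGraph K V).Walk X Y) : Module.rank K (Y.1.map X.1.mkQ) ≤ p.length := by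
  induction p with
  | nil => simp [mkQ_map_self]
  | @cons X Z Y hXZ p ih =>
    calc Module.rank K (Y.1.map X.1.mkQ)
        ≤ Module.rank K (Z.1.map X.1.mkQ) + Module.rank K (Y.1.map Z.1.mkQ) :=
          rank_map_mkQ_triangle _ _ _
      _ ≤ 1 + p.length := by
          rw [(adjacent_iff_rank_map_mkQ.1 hXZ).1]
          gcongr
      _ = (p.cons hXZ).length := by
          rw [SimpleGraph.Walk.length_cons]
          push_cast
          ring

end GrassmannGraph

lemma CovBy.finrank_eq {K V : Type*} [DivisionRing K] [AddCommGroup V] [Module K V]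
    [FiniteDimensional K V] {H X : Submodule K V} (h : H ⋖ X) :
    Module.finrank K X = Module.finrank K H + 1 := by
  obtain ⟨x, hxX, hxH⟩ := SetLike.exists_of_lt h.lt
  have hHx : H < H ⊔ span K {x} := by
    rw [sup_comm]
    exact (covBy_span_singleton_sup hxH).lt
  have hX : H ⊔ span K {x} = X :=
    eq_of_le_of_not_lt (sup_le h.le ((span_singleton_le_iff_mem _ _).2 hxX)) (h.2 hHx)
  rw [← hX, finrank_sup_span_singleton hxH]

section FiniteDimensional
open Module SimpleGraph
variable {K V : Type*} [DivisionRing K] [AddCommGroup V] [Module K V] [FiniteDimensional K V]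
  {m : ℕ}

lemma finrank_map_mkQ_add_finrank (X Y : Submodule K V) :
    finrank K (Y.map X.mkQ) + finrank K X = finrank K ↥(X ⊔ Y) := by
  have h := rank_map_mkQ_add_rank X Y
  rw [← finrank_eq_rank, ← finrank_eq_rank, ← finrank_eq_rank] at h
  exact_mod_cast h

lemma InG.finrank_eq (hV : finrank K V = 2 * m) {X : Submodule K V} (hX : InG K V X) :
    finrank K X = m := by
  obtain ⟨e⟩ := hX
  have := X.finrank_quotient_add_finrank
  rw [← e.finrank_eq] at this
  omega

lemma inG_of_finrank_eq (hV : finrank K V = 2 * m) {X : Submodule K V}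
    (hX : finrank K X = m) : InG K V X := by
  have := X.finrank_quotient_add_finrank
  exact FiniteDimensional.nonempty_linearEquiv_of_finrank_eq (by omega)

lemma nonempty_inG (hV : finrank K V = 2 * m) : Nonempty {X : Submodule K V // InG K V X} := by
  obtain ⟨f, hf⟩ := exists_linearIndependent_of_le_finrank (R := K) (M := V) (n := m) (by omega)
  refine ⟨⟨span K (Set.range f), inG_of_finrank_eq hV ?_⟩⟩
  rw [finrank_span_eq_card hf, Fintype.card_fin]

lemma adjacent_iff_finrank_sup (hV : finrank K V = 2 * m) {X Y : Submodule K V}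
    (hX : InG K V X) (hY : InG K V Y) : Adjacent K V X Y ↔ finrank K ↥(X ⊔ Y) = m + 1 := by
  have hXY := finrank_map_mkQ_add_finrank X Y
  have hYX := finrank_map_mkQ_add_finrank Y X
  rw [hX.finrank_eq hV] at hXY
  rw [hY.finrank_eq hV, sup_comm] at hYX
  rw [adjacent_iff_rank_map_mkQ, rank_eq_one_iff_finrank_eq_one, rank_eq_one_iff_finrank_eq_one]
  omega

lemma isCompl_iff_finrank_sup (hV : finrank K V = 2 * m) {X Y : Submodule K V}
    (hX : InG K V X) (hY : InG K V Y) : IsCompl X Y ↔ finrank K ↥(X ⊔ Y) = 2 * m := by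
  refine ⟨fun h => by rw [h.sup_eq_top, finrank_top, hV], fun h => ?_⟩
  have hsup : X ⊔ Y = ⊤ := eq_top_of_finrank_eq (h.trans hV.symm)
  have hinf := finrank_sup_add_finrank_inf_eq X Y
  rw [h, hX.finrank_eq hV, hY.finrank_eq hV] at hinf
  exact ⟨disjoint_iff.2 (finrank_eq_zero.1 (by omega)), codisjoint_iff.2 hsup⟩

/-- The new vertex is `H ⊔ ⟨y⟩`, where `H ⊇ X ∩ Y` is a hyperplane of `X` and `y ∈ Y \ X`. -/
lemma exists_adjacent_finrank_sup_lt (hV : finrank K V = 2 * m) {X Y : Submodule K V}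
    (hX : InG K V X) (hY : InG K V Y) (hXY : X ≠ Y) :
    ∃ Z, InG K V Z ∧ Adjacent K V X Z ∧ finrank K ↥(Z ⊔ Y) + 1 = finrank K ↥(X ⊔ Y) := by
  have hXm := hX.finrank_eq hV
  have hYm := hY.finrank_eq hV
  have hYX : ¬ Y ≤ X := fun h => hXY (eq_of_le_of_finrank_eq h (hYm.trans hXm.symm)).symm
  have hlt : X ⊓ Y < X := inf_le_left.lt_of_ne fun h =>
    hXY (eq_of_le_of_finrank_eq (inf_eq_left.1 h) (hXm.trans hYm.symm))
  obtain ⟨H, hWH, hHX⟩ := exists_le_covBy_of_lt hlt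
  obtain ⟨y, hyY, hyX⟩ := SetLike.not_le_iff_exists.1 hYX
  have hyH : y ∉ H := fun h => hyX (hHX.le h)
  have hHm : finrank K H + 1 = m := hXm ▸ hHX.finrank_eq.symm
  have hZ : InG K V (span K {y} ⊔ H) :=
    inG_of_finrank_eq hV (by rw [(covBy_span_singleton_sup hyH).finrank_eq, hHm])
  refine ⟨_, hZ, (adjacent_iff_finrank_sup hV hX hZ).2 ?_, ?_⟩
  · rw [sup_left_comm, sup_eq_left.2 hHX.le, sup_comm, finrank_sup_span_singleton hyX, hXm]
  · have hZY : span K {y} ⊔ H ⊔ Y = H ⊔ Y := by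
      rw [sup_comm (span K {y}), sup_assoc, sup_eq_right.2 ((span_singleton_le_iff_mem _ _).2 hyY)]
    have hHY : H ⊓ Y = X ⊓ Y := le_antisymm (inf_le_inf_right Y hHX.le) (le_inf hWH inf_le_right)
    have hHsum := finrank_sup_add_finrank_inf_eq H Y
    have hXsum := finrank_sup_add_finrank_inf_eq X Y
    rw [hHY] at hHsum
    rw [hZY]
    omega

lemma exists_walk_length_grassmannGraph (hV : finrank K V = 2 * m) (d : ℕ) :
    ∀ X Y : {X : Submodule K V // InG K V X}, d + m = finrank K ↥(X.1 ⊔ Y.1) →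
      ∃ p : (grassmannGraph K V).Walk X Y, p.length = d := by
  induction d with
  | zero =>
    intro X Y h
    have hX : X.1 = X.1 ⊔ Y.1 :=
      eq_of_le_of_finrank_eq le_sup_left (by rw [X.2.finrank_eq hV, ← h, zero_add])
    have hY : Y.1 = X.1 ⊔ Y.1 :=
      eq_of_le_of_finrank_eq le_sup_right (by rw [Y.2.finrank_eq hV, ← h, zero_add])
    obtain rfl : X = Y := Subtype.ext (hX.trans hY.symm)
    exact ⟨Walk.nil, rfl⟩
  | succ d ih =>
    intro X Y h
    have hXY : X.1 ≠ Y.1 := by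
      intro hXY
      rw [hXY, sup_idem, Y.2.finrank_eq hV] at h
      omega
    obtain ⟨Z, hZ, hXZ, hZY⟩ := exists_adjacent_finrank_sup_lt hV X.2 Y.2 hXY
    obtain ⟨p, hp⟩ := ih ⟨Z, hZ⟩ Y (show d + m = finrank K ↥(Z ⊔ Y.1) by omega)
    exact ⟨Walk.cons (show (grassmannGraph K V).Adj X ⟨Z, hZ⟩ from hXZ) p, by
      rw [Walk.length_cons, hp]⟩

theorem edist_grassmannGraph (hV : finrank K V = 2 * m) (X Y : {X : Submodule K V // InG K V X}) :
    (grassmannGraph K V).edist X Y = finrank K (Y.1.map X.1.mkQ) := by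
  have hsum := finrank_map_mkQ_add_finrank X.1 Y.1
  rw [X.2.finrank_eq hV] at hsum
  obtain ⟨p, hp⟩ := exists_walk_length_grassmannGraph hV _ X Y hsum
  refine le_antisymm (hp ▸ edist_le p) ?_
  obtain ⟨q, hq⟩ := p.reachable.exists_walk_length_eq_edist
  have h := rank_map_mkQ_le_length q
  rw [← finrank_eq_rank] at h
  rw [← hq]
  exact_mod_cast h

lemma isCompl_iff_edist_grassmannGraph (hV : finrank K V = 2 * m)
    (X Y : {X : Submodule K V // InG K V X}) :
    IsCompl X.1 Y.1 ↔ (grassmannGraph K V).edist X Y = m := by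
  have hsum := finrank_map_mkQ_add_finrank X.1 Y.1
  rw [X.2.finrank_eq hV] at hsum
  rw [isCompl_iff_finrank_sup hV X.2 Y.2, edist_grassmannGraph hV, Nat.cast_inj]
  omega

theorem ediam_grassmannGraph (hV : finrank K V = 2 * m) : (grassmannGraph K V).ediam = m := by
  refine le_antisymm (ediam_le_of_edist_le fun X Y => ?_) ?_
  · have hsum := finrank_map_mkQ_add_finrank X.1 Y.1
    have hle := (X.1 ⊔ Y.1).finrank_le
    rw [X.2.finrank_eq hV] at hsum
    rw [edist_grassmannGraph hV, Nat.cast_le]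
    omega
  · obtain ⟨X⟩ := nonempty_inG hV
    obtain ⟨C, hC⟩ := X.1.exists_isCompl
    calc (m : ℕ∞) = (grassmannGraph K V).edist X ⟨C, X.2.of_isCompl_s10 hC⟩ :=
          ((isCompl_iff_edist_grassmannGraph hV _ _).1 hC).symm
      _ ≤ _ := edist_le_ediam

end FiniteDimensional

theorem rank_eq_of_ediam_grassmannGraph {K V : Type*} [DivisionRing K] [AddCommGroup V]
    [Module K V] [Nonempty {X : Submodule K V // InG K V X}] {m : ℕ}
    (h : (grassmannGraph K V).ediam = m) : Module.rank K V = (2 * m : ℕ) := by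
  obtain ⟨X⟩ := ‹Nonempty {X : Submodule K V // InG K V X}›
  obtain ⟨C, hC⟩ := X.1.exists_isCompl
  have hdist : (grassmannGraph K V).edist X ⟨C, X.2.of_isCompl_s10 hC⟩ ≤ m :=
    h ▸ SimpleGraph.edist_le_ediam
  obtain ⟨p, hp⟩ := (SimpleGraph.reachable_of_edist_ne_top
    (ne_top_of_le_ne_top (ENat.natCast_ne_top m) hdist)).exists_walk_length_eq_edist
  have hquot : Module.rank K (V ⧸ X.1) ≤ m := by
    have := rank_map_mkQ_le_length p
    rw [(map_mkQ_eq_top _ _).2 hC.sup_eq_top, rank_top] at this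
    exact this.trans (by exact_mod_cast (hp ▸ hdist : (p.length : ℕ∞) ≤ m))
  obtain ⟨e⟩ := X.2
  have hrank := rank_quotient_add_rank X.1
  rw [e.rank_eq] at hrank
  have : FiniteDimensional K V := Module.rank_lt_aleph0_iff.1 <| by
    have hm := hquot.trans_lt (Cardinal.natCast_lt_aleph0)
    rw [← hrank]
    exact Cardinal.add_lt_aleph0 hm hm
  have hV : Module.finrank K V = 2 * Module.finrank K X.1 := by
    have := X.1.finrank_quotient_add_finrank
    rw [← e.finrank_eq] at this
    omega
  have hk : Module.finrank K X.1 = m := by exact_mod_cast (ediam_grassmannGraph hV).symm.trans h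
  rw [← Module.finrank_eq_rank, hV, hk]

theorem stmt_10_general (K V : Type*) [DivisionRing K] [AddCommGroup V] [Module K V]
    (K' V' : Type*) [DivisionRing K'] [AddCommGroup V'] [Module K' V']
    (φ : {X : Submodule K V // InG K V X} → {X : Submodule K' V' // InG K' V' X})
    (hbij : Function.Bijective φ)
    (m : ℕ) (hV : Module.rank K V = (2 * m : ℕ))
    (hadj : ∀ X Y : {X : Submodule K V // InG K V X},
      Adjacent K V X.1 Y.1 ↔ Adjacent K' V' (φ X).1 (φ Y).1) :
    Module.rank K' V' = (2 * m : ℕ) ∧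
    ∀ X Y : {X : Submodule K V // InG K V X},
      IsCompl X.1 Y.1 ↔ IsCompl (φ X).1 (φ Y).1 := by
  have : FiniteDimensional K V := Module.rank_lt_aleph0_iff.1 (hV ▸ Cardinal.natCast_lt_aleph0)
  have hVf : Module.finrank K V = 2 * m := Module.finrank_eq_of_rank_eq hV
  let e : grassmannGraph K V ≃g grassmannGraph K' V' :=
    ⟨Equiv.ofBijective φ hbij, (hadj _ _).symm⟩
  have : Nonempty {X : Submodule K' V' // InG K' V' X} := (nonempty_inG hVf).map φ
  have hV' : Module.rank K' V' = (2 * m : ℕ) :=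
    rank_eq_of_ediam_grassmannGraph (e.ediam_eq.trans (ediam_grassmannGraph hVf))
  have : FiniteDimensional K' V' := Module.rank_lt_aleph0_iff.1 (hV' ▸ Cardinal.natCast_lt_aleph0)
  have hV'f : Module.finrank K' V' = 2 * m := Module.finrank_eq_of_rank_eq hV'
  refine ⟨hV', fun X Y => ?_⟩
  rw [isCompl_iff_edist_grassmannGraph hVf, isCompl_iff_edist_grassmannGraph hV'f,
    ← e.edist_eq X Y]
  rfl

/-- Let `dim V = 2m` be finite. Then an isomorphism of Grassmann graphs
(a bijection `φ : 𝒢 → 𝒢'` preserving adjacency in both directions) forces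
`dim V' = 2m`, and `φ` is also an isomorphism of distant graphs. -/
theorem stmt_10 (K V : Type*) [DivisionRing K] [AddCommGroup V] [Module K V]
    (K' V' : Type*) [DivisionRing K'] [AddCommGroup V'] [Module K' V']
    (hG : Nonempty {X : Submodule K V // InG K V X})
    (hG' : Nonempty {X : Submodule K' V' // InG K' V' X})
    (φ : {X : Submodule K V // InG K V X} → {X : Submodule K' V' // InG K' V' X})
    (hbij : Function.Bijective φ)
    (m : ℕ) (hV : Module.rank K V = (2 * m : ℕ))
    (hadj : ∀ X Y : {X : Submodule K V // InG K V X},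
      Adjacent K V X.1 Y.1 ↔ Adjacent K' V' (φ X).1 (φ Y).1) :
    Module.rank K' V' = (2 * m : ℕ) ∧
    ∀ X Y : {X : Submodule K V // InG K V X},
      IsCompl X.1 Y.1 ↔ IsCompl (φ X).1 (φ Y).1 :=
  stmt_10_general K V K' V' φ hbij m hV hadj
end
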